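/- arXiv:1804.01187 — 5 statements merged into one kernel-verified Lean document; each statement's English description precedes it below -/
import Mathlib

section
/- For ν > 0, θ > 0, and y > 0, the Bayes factor g(y, θ) = Γ(ν/2) · e^{−θ/2} · 2^{ν/2−1} · (√(θy))^{1−ν/2} · I_{ν/2−1}(√(θy)) satisfies ∂g/∂y = (α/2) · θ · (√(θy))^{−ν/2} · I_{ν/2}(√(θy)), where α = Γ(ν/2) e^{−θ/2} 2^{ν/2−1}; in particular ∂g/∂y > 0, so g is strictly increasing in y. -/
/-!
Writing `I_a(s) = (s/2)^a · F_{a+1}(s²/4)` with the entire series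
`F_β(x) = ∑ x^j / (Γ(β+j) j!)`, the Bayes factor becomes `Γ(ν/2) e^{-θ/2} F_{ν/2}(θy/4)`.
Termwise differentiation gives `F_β' = F_{β+1}`, and `F_β` is positive on `[0, ∞)`,
so the derivative is positive and `g` is increasing.
-/

/-- Modified Bessel function of the first kind, defined by its power series. -/
noncomputable def besselI (ν z : ℝ) : ℝ :=
  ∑' j : ℕ, (z / 2) ^ (2 * (j : ℝ) + ν) / (Real.Gamma (ν + j + 1) * (Nat.factorial j))

/-- Bayes factor for the noncentral chi-squared test. -/
noncomputable def bfChiSq (ν θ y : ℝ) : ℝ :=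
  Real.Gamma (ν / 2) * Real.exp (-θ / 2) * (2 : ℝ) ^ (ν / 2 - 1) *
    Real.sqrt (θ * y) ^ (1 - ν / 2) * besselI (ν / 2 - 1) (Real.sqrt (θ * y))

open Real Set Filter Topology

/-- The regularized hypergeometric limit function `₀F₁(; β; x) / Γ(β)`. -/
noncomputable def reg0F1 (β x : ℝ) : ℝ :=
  ∑' j : ℕ, x ^ j / (Gamma (β + j) * j.factorial)

namespace reg0F1

variable {β : ℝ}

lemma summable (hβ : 0 < β) (x : ℝ) :
    Summable fun j : ℕ => x ^ j / (Gamma (β + j) * j.factorial) := by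
  refine (Real.summable_pow_div_factorial |x|).of_norm_bounded_eventually_nat ?_
  filter_upwards [eventually_ge_atTop 2] with j hj
  have hj : (2 : ℝ) ≤ j := by exact_mod_cast hj
  -- `Γ` is increasing on `[2, ∞)`, so `Γ(β + j) ≥ Γ(2) = 1` once `j ≥ 2`.
  have hΓ : 1 ≤ Gamma (β + j) := Gamma_two ▸
    Gamma_strictMonoOn_Ici.monotoneOn (mem_Ici.2 le_rfl) (mem_Ici.2 (by linarith)) (by linarith)
  rw [norm_div, norm_pow, Real.norm_eq_abs, norm_mul, Real.norm_of_nonneg (by linarith),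
    Real.norm_natCast]
  gcongr
  exact le_mul_of_one_le_left (by positivity) hΓ

-- No `Γ` recurrence is needed: `Γ(β + (j + 1))` is literally `Γ((β + 1) + j)`.
lemma natCast_succ_mul_pow_div (j : ℕ) (z : ℝ) :
    ((j + 1 : ℕ) : ℝ) * z ^ j / (Gamma (β + (j + 1 : ℕ)) * (j + 1).factorial) =
      z ^ j / (Gamma (β + 1 + j) * j.factorial) := by
  rw [Nat.factorial_succ, Nat.cast_mul, Nat.cast_add_one, add_assoc, add_comm (1 : ℝ)]
  field_simp

lemma hasDerivAt (hβ : 0 < β) (x : ℝ) :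
    HasDerivAt (reg0F1 β) (reg0F1 (β + 1) x) x := by
  set R := |x| + 1
  have hbound : ∀ (j : ℕ) z, z ∈ Metric.ball x 1 →
      ‖(j : ℝ) * z ^ (j - 1) / (Gamma (β + j) * j.factorial)‖ ≤
        (j : ℝ) * R ^ (j - 1) / (Gamma (β + j) * j.factorial) := by
    intro j z hz
    have hzR : |z| ≤ R := by
      have := abs_sub_abs_le_abs_sub z x
      rw [Metric.mem_ball, Real.dist_eq] at hz
      linarith
    have hΓ : 0 < Gamma (β + j) := Gamma_pos_of_pos (by positivity)
    rw [norm_div, norm_mul, norm_pow, Real.norm_natCast, Real.norm_eq_abs,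
      Real.norm_of_nonneg (by positivity)]
    gcongr
  have hderiv_summable : ∀ z : ℝ,
      Summable fun j : ℕ => (j : ℝ) * z ^ (j - 1) / (Gamma (β + j) * j.factorial) := by
    intro z
    rw [← summable_nat_add_iff 1]
    simpa only [Nat.add_sub_cancel, natCast_succ_mul_pow_div] using summable (by linarith) z
  have hsum := hasDerivAt_tsum_of_isPreconnected (hderiv_summable R) Metric.isOpen_ball
    (convex_ball x 1).isPreconnected (fun j z _ => (hasDerivAt_pow j z).div_const _) hbound
    (Metric.mem_ball_self one_pos) (summable hβ x) (Metric.mem_ball_self one_pos)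
  have hderiv_sum : ∑' j : ℕ, (j : ℝ) * x ^ (j - 1) / (Gamma (β + j) * j.factorial) =
      reg0F1 (β + 1) x := by
    rw [(hderiv_summable x).tsum_eq_zero_add]
    simp only [CharP.cast_eq_zero, zero_mul, zero_div, zero_add, Nat.add_sub_cancel,
      natCast_succ_mul_pow_div]
    rfl
  exact hderiv_sum ▸ hsum

lemma pos (hβ : 0 < β) {x : ℝ} (hx : 0 ≤ x) : 0 < reg0F1 β x := by
  refine (summable hβ x).tsum_pos (fun j => ?_) 0 ?_
  · have := Gamma_pos_of_pos (show 0 < β + j by positivity)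
    positivity
  · simpa using Gamma_pos_of_pos hβ

end reg0F1

lemma besselI_eq_rpow_mul_reg0F1 (a : ℝ) {s : ℝ} (hs : 0 < s) :
    besselI a s = (s / 2) ^ a * reg0F1 (a + 1) (s ^ 2 / 4) := by
  rw [besselI, reg0F1, ← tsum_mul_left]
  congr 1 with j
  rw [rpow_add (by positivity), mul_comm 2, rpow_mul (by positivity), rpow_natCast, rpow_two,
    add_right_comm, ← pow_mul, pow_mul']
  ring

lemma bfChiSq_eq_reg0F1 (ν : ℝ) {θ y : ℝ} (hθy : 0 < θ * y) :
    bfChiSq ν θ y = Gamma (ν / 2) * exp (-θ / 2) * reg0F1 (ν / 2) (θ * y / 4) := by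
  have hs : 0 < √(θ * y) := sqrt_pos.2 hθy
  rw [bfChiSq, besselI_eq_rpow_mul_reg0F1 _ hs, sub_add_cancel, sq_sqrt hθy.le,
    div_rpow hs.le zero_le_two, show 1 - ν / 2 = -(ν / 2 - 1) by ring, rpow_neg hs.le]
  have := rpow_pos_of_pos hs (ν / 2 - 1)
  have := rpow_pos_of_pos two_pos (ν / 2 - 1)
  field_simp

lemma bfChiSq_derivFormula_eq {ν θ y : ℝ} (hθy : 0 < θ * y) :
    Gamma (ν / 2) * exp (-θ / 2) * (2 : ℝ) ^ (ν / 2 - 1) / 2 * θ *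
        √(θ * y) ^ (-(ν / 2)) * besselI (ν / 2) √(θ * y) =
      Gamma (ν / 2) * exp (-θ / 2) * (reg0F1 (ν / 2 + 1) (θ * y / 4) * (θ / 4)) := by
  have hs : 0 < √(θ * y) := sqrt_pos.2 hθy
  rw [besselI_eq_rpow_mul_reg0F1 _ hs, sq_sqrt hθy.le, div_rpow hs.le zero_le_two,
    rpow_neg hs.le, rpow_sub two_pos, rpow_one]
  have := rpow_pos_of_pos hs (ν / 2)
  have := rpow_pos_of_pos two_pos (ν / 2)
  field_simp
  ring

lemma hasDerivAt_bfChiSq {ν θ y : ℝ} (hν : 0 < ν) (hθ : 0 < θ) (hy : 0 < y) :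
    HasDerivAt (fun w => bfChiSq ν θ w)
      (Gamma (ν / 2) * exp (-θ / 2) * (reg0F1 (ν / 2 + 1) (θ * y / 4) * (θ / 4))) y := by
  have hlocal : (fun w => Gamma (ν / 2) * exp (-θ / 2) * reg0F1 (ν / 2) (θ * w / 4))
      =ᶠ[𝓝 y] fun w => bfChiSq ν θ w := by
    filter_upwards [Ioi_mem_nhds hy] with w hw
    exact (bfChiSq_eq_reg0F1 ν (mul_pos hθ hw)).symm
  have hinner : HasDerivAt (fun w => θ * w / 4) (θ / 4) y := by
    simpa using ((hasDerivAt_id y).const_mul θ).div_const 4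
  exact (((reg0F1.hasDerivAt (by positivity) _).comp y hinner).const_mul _).congr_of_eventuallyEq
    hlocal.symm

theorem stmt_7 (ν θ : ℝ) (hν : 1 ≤ ν) (hθ : 0 < θ) :
    (∀ y > 0,
      HasDerivAt (fun w => bfChiSq ν θ w)
        (Real.Gamma (ν / 2) * Real.exp (-θ / 2) * (2 : ℝ) ^ (ν / 2 - 1) / 2 * θ *
          Real.sqrt (θ * y) ^ (-(ν / 2)) * besselI (ν / 2) (Real.sqrt (θ * y))) y ∧
      0 < Real.Gamma (ν / 2) * Real.exp (-θ / 2) * (2 : ℝ) ^ (ν / 2 - 1) / 2 * θ *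
          Real.sqrt (θ * y) ^ (-(ν / 2)) * besselI (ν / 2) (Real.sqrt (θ * y))) ∧
    StrictMonoOn (fun y => bfChiSq ν θ y) (Set.Ioi (0 : ℝ)) := by
  have hν0 : 0 < ν := by linarith
  have hderiv_pos : ∀ y > 0,
      0 < Gamma (ν / 2) * exp (-θ / 2) * (reg0F1 (ν / 2 + 1) (θ * y / 4) * (θ / 4)) := by
    intro y hy
    have := Gamma_pos_of_pos (half_pos hν0)
    have := reg0F1.pos (β := ν / 2 + 1) (by positivity) (x := θ * y / 4) (by positivity)
    positivity
  refine ⟨fun y hy => bfChiSq_derivFormula_eq (mul_pos hθ hy) ▸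
      ⟨hasDerivAt_bfChiSq hν0 hθ hy, hderiv_pos y hy⟩,
    strictMonoOn_of_deriv_pos (convex_Ioi 0) ?_ ?_⟩
  · exact fun y hy => (hasDerivAt_bfChiSq hν0 hθ hy).continuousAt.continuousWithinAt
  · rw [interior_Ioi]
    exact fun y hy => (hasDerivAt_bfChiSq hν0 hθ hy).deriv ▸ hderiv_pos y hy
end

section
/- For the noncentral chi-squared Bayes factor g(y,θ) = Γ(ν/2) e^{−θ/2} 2^{ν/2−1} (√(θy))^{1−ν/2} I_{ν/2−1}(√(θy)) with ν ≥ 1, θ > 0 fixed: the map y ↦ g(y,θ) on (0,∞) is continuous, strictly increasing, tends to a limit less than or equal to Γ(ν/2) e^{−θ/2} 2^{ν/2−1} · lim_{z→0⁺} z^{1−ν/2} I_{ν/2−1}(z) as y → 0⁺, and tends to +∞ as y → ∞. Consequently, for any γ exceeding its infimum, there is a unique r(θ) > 0 with g(r(θ), θ) = γ and {y > 0 : g(y,θ) > γ} = (r(θ), ∞). -/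
/-!
Substituting `z = √(θy)` into the power series of `I_{ν/2-1}` gives
`g(y, θ) = Γ(ν/2) e^{-θ/2} ₀F̃₁(; ν/2; θy/4)`, where `₀F̃₁(; a; x) = ∑ xʲ / (Γ(a + j) j!)` is an
entire series with positive coefficients. Hence `g(·, θ)` is continuous and strictly increasing on
`(0, ∞)` and grows at least linearly. Its limit at `0⁺` is `e^{-θ/2}`, which equals the bound
`Γ(ν/2) e^{-θ/2} 2^{ν/2-1} · lim z^{1-ν/2} I_{ν/2-1}(z)` because that limit is `2^{1-ν/2} / Γ(ν/2)`.
By the intermediate value theorem `g(·, θ)` maps `(0, ∞)` onto `(e^{-θ/2}, ∞)`, and strict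
monotonicity turns each level above the infimum into a unique threshold `r(θ)`.
-/

open Filter Set

open Real Topology
open scoped Nat

noncomputable def regularized0F1 (a x : ℝ) : ℝ :=
  ∑' j : ℕ, x ^ j / (Gamma (a + j) * j !)

section regularized0F1

variable {a : ℝ}

lemma Gamma_add_mul_factorial_pos (ha : 0 < a) (j : ℕ) : 0 < Gamma (a + j) * j ! := by
  have := Gamma_pos_of_pos (by positivity : 0 < a + j)
  positivity

lemma regularized0F1_term_succ (ha : 0 < a) (x : ℝ) (j : ℕ) :
    x ^ (j + 1) / (Gamma (a + ↑(j + 1)) * (j + 1)!) =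
      x / ((a + j) * (j + 1)) * (x ^ j / (Gamma (a + j) * j !)) := by
  have haj : 0 < a + j := by positivity
  rw [Nat.cast_succ, ← add_assoc, Gamma_add_one haj.ne', Nat.factorial_succ, Nat.cast_mul,
    pow_succ]
  have := Gamma_add_mul_factorial_pos ha j
  field_simp
  push_cast
  ring

lemma summable_regularized0F1 (ha : 0 < a) (x : ℝ) :
    Summable fun j : ℕ => x ^ j / (Gamma (a + j) * j !) := by
  refine summable_of_ratio_norm_eventually_le (r := 1 / 2) (by norm_num) ?_
  filter_upwards [eventually_ge_atTop ⌈2 * |x|⌉₊] with n hn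
  have hxn : 2 * |x| ≤ n := (Nat.ceil_le).1 hn
  rw [regularized0F1_term_succ ha, norm_mul]
  gcongr
  rw [norm_div, Real.norm_eq_abs, Real.norm_of_nonneg (by positivity),
    div_le_iff₀ (by positivity)]
  nlinarith [abs_nonneg x]

lemma regularized0F1_zero (a : ℝ) : regularized0F1 a 0 = (Gamma a)⁻¹ := by
  rw [regularized0F1, tsum_eq_single 0 fun j hj => by rw [zero_pow hj, zero_div]]
  simp

lemma continuous_regularized0F1 (ha : 0 < a) : Continuous (regularized0F1 a) := by
  refine continuous_iff_continuousAt.2 fun x₀ => ?_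
  set R := |x₀| + 1
  have hR : ContinuousOn (regularized0F1 a) (Icc (-R) R) := by
    refine continuousOn_tsum (fun j => (continuous_pow j).continuousOn.div_const _)
      (summable_regularized0F1 ha R) fun j x hx => ?_
    have := Gamma_add_mul_factorial_pos ha j
    rw [norm_div, norm_pow, Real.norm_of_nonneg this.le]
    gcongr
    exact abs_le.2 hx
  exact hR.continuousAt
    (Icc_mem_nhds (by linarith [neg_abs_le x₀]) (by linarith [le_abs_self x₀]))

lemma strictMonoOn_regularized0F1 (ha : 0 < a) : StrictMonoOn (regularized0F1 a) (Ici 0) := by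
  intro x hx y _ hxy
  refine Summable.tsum_lt_tsum (i := 1) (fun j => ?_) ?_ (summable_regularized0F1 ha x)
    (summable_regularized0F1 ha y)
  · have := Gamma_add_mul_factorial_pos ha j
    gcongr
  · have := Gamma_add_mul_factorial_pos ha 1
    simpa using div_lt_div_of_pos_right hxy this

lemma div_Gamma_add_one_le_regularized0F1 (ha : 0 < a) {x : ℝ} (hx : 0 ≤ x) :
    x / Gamma (a + 1) ≤ regularized0F1 a x := by
  simpa [regularized0F1] using (summable_regularized0F1 ha x).le_tsum 1 fun j _ =>
    div_nonneg (pow_nonneg hx j) (Gamma_add_mul_factorial_pos ha j).le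

lemma tendsto_regularized0F1_atTop (ha : 0 < a) : Tendsto (regularized0F1 a) atTop atTop := by
  refine tendsto_atTop_mono' atTop ?_
    (tendsto_id.atTop_div_const (Gamma_pos_of_pos (by linarith : 0 < a + 1)))
  filter_upwards [eventually_ge_atTop 0] with x hx
  exact div_Gamma_add_one_le_regularized0F1 ha hx

end regularized0F1

lemma rpow_one_sub_mul_besselI_sub_one (a : ℝ) {z : ℝ} (hz : 0 < z) :
    z ^ (1 - a) * besselI (a - 1) z = 2 ^ (1 - a) * regularized0F1 a (z ^ 2 / 4) := by
  rw [besselI, regularized0F1, ← tsum_mul_left, ← tsum_mul_left]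
  refine tsum_congr fun j => ?_
  have hz2 : 0 < z / 2 := by positivity
  have hpow : (z / 2) ^ (1 - a) * (z / 2) ^ (2 * (j : ℝ) + (a - 1)) = (z ^ 2 / 4) ^ j := by
    rw [← rpow_add hz2,
      show 1 - a + (2 * (j : ℝ) + (a - 1)) = ((2 * j : ℕ) : ℝ) by push_cast; ring,
      rpow_natCast, pow_mul]
    ring
  have hsplit : z ^ (1 - a) = 2 ^ (1 - a) * (z / 2) ^ (1 - a) := by
    rw [← mul_rpow zero_le_two hz2.le, mul_div_cancel₀ z two_ne_zero]
  rw [show a - 1 + j + 1 = a + j by ring, hsplit, ← hpow]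
  ring

lemma tendsto_rpow_one_sub_mul_besselI_sub_one {a : ℝ} (ha : 0 < a) :
    Tendsto (fun z => z ^ (1 - a) * besselI (a - 1) z) (𝓝[>] 0)
      (𝓝 (2 ^ (1 - a) * (Gamma a)⁻¹)) := by
  have hcont : Continuous fun z : ℝ => 2 ^ (1 - a) * regularized0F1 a (z ^ 2 / 4) :=
    continuous_const.mul ((continuous_regularized0F1 ha).comp (by fun_prop))
  have := (hcont.tendsto 0).mono_left (nhdsWithin_le_nhds (s := Ioi 0))
  rw [zero_pow two_ne_zero, zero_div, regularized0F1_zero] at this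
  refine this.congr' ?_
  filter_upwards [self_mem_nhdsWithin] with z hz
  exact (rpow_one_sub_mul_besselI_sub_one a hz).symm

lemma StrictMonoOn.image_Ioi_eq_Ioi_of_tendsto {f : ℝ → ℝ} {b L : ℝ}
    (hmono : StrictMonoOn f (Ioi b)) (hcont : ContinuousOn f (Ioi b))
    (hb : Tendsto f (𝓝[>] b) (𝓝 L)) (htop : Tendsto f atTop atTop) :
    f '' Ioi b = Ioi L := by
  refine Subset.antisymm ?_ ?_
  · rintro _ ⟨y, hy, rfl⟩
    obtain ⟨y', hby', hy'y⟩ := exists_between (mem_Ioi.1 hy)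
    have hLy' : L ≤ f y' := by
      refine le_of_tendsto hb ?_
      filter_upwards [Ioo_mem_nhdsGT hby'] with t ht
      exact (hmono ht.1 hby' ht.2).le
    exact hLy'.trans_lt (hmono hby' hy hy'y)
  · exact isPreconnected_Ioi.intermediate_value_Ioi (l₁ := 𝓝[>] b) inf_le_right
      (le_principal_iff.2 (Ioi_mem_atTop b)) hcont hb htop

lemma StrictMonoOn.existsUnique_eq_and_setOf_lt_eq_Ioi {α β : Type*} [LinearOrder α]
    [LinearOrder β] {f : α → β} {b : α} {γ : β} (hmono : StrictMonoOn f (Ioi b))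
    (hγ : γ ∈ f '' Ioi b) :
    ∃! r, (b < r ∧ f r = γ) ∧ {y | b < y ∧ γ < f y} = Ioi r := by
  obtain ⟨r, hr, rfl⟩ := hγ
  have hlevel : {y | b < y ∧ f r < f y} = Ioi r := by
    ext y
    exact ⟨fun ⟨hy, hry⟩ => (hmono.lt_iff_lt hr hy).1 hry,
      fun hry => ⟨hr.trans hry, hmono hr (mem_Ioi.2 (mem_Ioi.1 hr |>.trans hry)) hry⟩⟩
  exact ⟨r, ⟨⟨hr, rfl⟩, hlevel⟩, fun r' ⟨_, hr'⟩ => Ioi_injective (hr'.symm.trans hlevel)⟩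

lemma bfChiSq_eq_regularized0F1 (ν : ℝ) {θ y : ℝ} (hθy : 0 < θ * y) :
    bfChiSq ν θ y = Gamma (ν / 2) * exp (-θ / 2) * regularized0F1 (ν / 2) (θ * y / 4) := by
  rw [bfChiSq, mul_assoc _ (√(θ * y) ^ _),
    rpow_one_sub_mul_besselI_sub_one _ (sqrt_pos.2 hθy), sq_sqrt hθy.le, ← neg_sub (ν / 2) 1,
    rpow_neg zero_le_two]
  field_simp

section bfChiSq

variable {ν θ : ℝ}

lemma continuousOn_bfChiSq (hν : 0 < ν) (hθ : 0 < θ) : ContinuousOn (bfChiSq ν θ) (Ioi 0) := by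
  have hcont : Continuous fun y =>
      Gamma (ν / 2) * exp (-θ / 2) * regularized0F1 (ν / 2) (θ * y / 4) :=
    continuous_const.mul ((continuous_regularized0F1 (half_pos hν)).comp (by fun_prop))
  exact hcont.continuousOn.congr fun y hy => bfChiSq_eq_regularized0F1 ν (mul_pos hθ hy)

lemma strictMonoOn_bfChiSq (hν : 0 < ν) (hθ : 0 < θ) : StrictMonoOn (bfChiSq ν θ) (Ioi 0) := by
  intro x (hx : 0 < x) y (hy : 0 < y) hxy
  rw [bfChiSq_eq_regularized0F1 ν (mul_pos hθ hx), bfChiSq_eq_regularized0F1 ν (mul_pos hθ hy)]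
  have hΓ := Gamma_pos_of_pos (half_pos hν)
  refine mul_lt_mul_of_pos_left ?_ (by positivity)
  exact strictMonoOn_regularized0F1 (half_pos hν) (mem_Ici.2 (by positivity))
    (mem_Ici.2 (by positivity)) (by gcongr)

lemma tendsto_bfChiSq_nhdsGT_zero (hν : 0 < ν) (hθ : 0 < θ) :
    Tendsto (bfChiSq ν θ) (𝓝[>] 0) (𝓝 (exp (-θ / 2))) := by
  have hcont : Continuous fun y =>
      Gamma (ν / 2) * exp (-θ / 2) * regularized0F1 (ν / 2) (θ * y / 4) :=
    continuous_const.mul ((continuous_regularized0F1 (half_pos hν)).comp (by fun_prop))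
  have := (hcont.tendsto 0).mono_left (nhdsWithin_le_nhds (s := Ioi 0))
  rw [mul_zero, zero_div, regularized0F1_zero, mul_right_comm,
    mul_inv_cancel₀ (Gamma_pos_of_pos (half_pos hν)).ne', one_mul] at this
  refine this.congr' ?_
  filter_upwards [self_mem_nhdsWithin] with y hy
  exact (bfChiSq_eq_regularized0F1 ν (mul_pos hθ hy)).symm

lemma tendsto_bfChiSq_atTop (hν : 0 < ν) (hθ : 0 < θ) : Tendsto (bfChiSq ν θ) atTop atTop := by
  have hΓ := Gamma_pos_of_pos (half_pos hν)
  have hlin : Tendsto (fun y => θ * y / 4) atTop atTop :=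
    (tendsto_id.const_mul_atTop hθ).atTop_div_const four_pos
  have := ((tendsto_regularized0F1_atTop (half_pos hν)).comp hlin).const_mul_atTop
    (by positivity : 0 < Gamma (ν / 2) * exp (-θ / 2))
  refine this.congr' ?_
  filter_upwards [eventually_gt_atTop 0] with y hy
  exact (bfChiSq_eq_regularized0F1 ν (mul_pos hθ hy)).symm

end bfChiSq

theorem stmt_9 (ν θ : ℝ) (hν : 1 ≤ ν) (hθ : 0 < θ) :
    ContinuousOn (fun y => bfChiSq ν θ y) (Ioi (0 : ℝ)) ∧
    StrictMonoOn (fun y => bfChiSq ν θ y) (Ioi (0 : ℝ)) ∧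
    (∃ L : ℝ, Tendsto (fun y => bfChiSq ν θ y) (nhdsWithin 0 (Ioi 0)) (nhds L) ∧
      ∀ l : ℝ,
        Tendsto (fun z : ℝ => z ^ (1 - ν / 2) * besselI (ν / 2 - 1) z)
          (nhdsWithin 0 (Ioi 0)) (nhds l) →
        L ≤ Real.Gamma (ν / 2) * Real.exp (-θ / 2) * (2 : ℝ) ^ (ν / 2 - 1) * l) ∧
    Tendsto (fun y => bfChiSq ν θ y) atTop atTop ∧
    ∀ γ : ℝ, sInf ((fun y => bfChiSq ν θ y) '' Ioi (0 : ℝ)) < γ →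
      ∃! r : ℝ, (0 < r ∧ bfChiSq ν θ r = γ) ∧
        {y : ℝ | 0 < y ∧ γ < bfChiSq ν θ y} = Ioi r := by
  have hν₀ : 0 < ν := by linarith
  have hcont := continuousOn_bfChiSq hν₀ hθ
  have hmono := strictMonoOn_bfChiSq hν₀ hθ
  have hzero := tendsto_bfChiSq_nhdsGT_zero hν₀ hθ
  have htop := tendsto_bfChiSq_atTop hν₀ hθ
  have himage := hmono.image_Ioi_eq_Ioi_of_tendsto hcont hzero htop
  refine ⟨hcont, hmono, ⟨_, hzero, fun l hl => le_of_eq ?_⟩, htop, fun γ hγ => ?_⟩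
  · rw [tendsto_nhds_unique hl (tendsto_rpow_one_sub_mul_besselI_sub_one (half_pos hν₀))]
    rw [← neg_sub (ν / 2) 1, rpow_neg zero_le_two]
    have := Gamma_pos_of_pos (half_pos hν₀)
    field_simp
  · rw [himage, csInf_Ioi] at hγ
    exact hmono.existsUnique_eq_and_setOf_lt_eq_Ioi (himage ▸ hγ)
end

section
/- Suppose η is strictly increasing on Θ₁ ⊆ (θ₀, ∞). If θ* ∈ Θ₁ minimizes r(θ) = [log γ + n(A(θ) − A(θ₀))] / (η(θ) − η(θ₀)) over Θ₁, then for every probability measure μ on ℝ and every θ ∈ Θ₁, μ({y : g(y,θ) > γ}) ≤ μ({y : g(y,θ*) > γ}), where g(y,θ) = exp{n(A(θ₀)−A(θ)) + y(η(θ)−η(θ₀))}. -/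
open Set MeasureTheory

theorem stmt_13 (n : ℕ) (hn : 1 ≤ n) (A η : ℝ → ℝ) (θ₀ γ : ℝ) (hγ : 0 < γ)
    (Θ₁ : Set ℝ) (hΘ₁ : Θ₁ ⊆ Ioi θ₀)
    (hη : StrictMonoOn η (insert θ₀ Θ₁))
    (g : ℝ → ℝ → ℝ)
    (hg : ∀ y θ, g y θ = Real.exp ((n : ℝ) * (A θ₀ - A θ) + y * (η θ - η θ₀)))
    (r : ℝ → ℝ)
    (hr : ∀ θ, r θ = (Real.log γ + (n : ℝ) * (A θ - A θ₀)) / (η θ - η θ₀))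
    (θstar : ℝ) (hstar : θstar ∈ Θ₁) (hmin : ∀ θ ∈ Θ₁, r θstar ≤ r θ) :
    ∀ (μ : Measure ℝ), IsProbabilityMeasure μ →
      ∀ θ ∈ Θ₁, μ {y : ℝ | γ < g y θ} ≤ μ {y : ℝ | γ < g y θstar} := by
  have key : ∀ θ ∈ Θ₁, ∀ y : ℝ, γ < g y θ ↔ r θ < y := by
    intro θ hθ y
    have hpos : 0 < η θ - η θ₀ := by
      have := hη (mem_insert θ₀ Θ₁) (mem_insert_of_mem θ₀ hθ) (hΘ₁ hθ)
      linarith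
    rw [hg, hr, ← Real.log_lt_iff_lt_exp hγ, div_lt_iff₀ hpos]
    constructor <;> intro h <;> nlinarith
  intro μ _ θ hθ
  apply measure_mono
  intro y hy
  simp only [mem_setOf_eq] at hy ⊢
  rw [key θstar hstar]
  rw [key θ hθ] at hy
  exact lt_of_le_of_lt (hmin θ hθ) hy
end

section
/- With a(θ) = (γₙθ − θ₀)/(γₙ − 1) − √(γₙ(θ − θ₀)²/(γₙ − 1)² − U/n) defined for θ > θ₀ with γₙ(θ − θ₀)²/(γₙ−1)² ≥ U/n, where γₙ > 1, U > 0, n ≥ 1: the minimum of a over this domain equals θ₀ + √(U(γₙ − 1)/n), and a attains this minimum value at a unique θ > θ₀. -/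
open Set

theorem stmt_15 (n : ℕ) (hn : 1 ≤ n) (U θ₀ γₙ : ℝ) (hU : 0 < U) (hγₙ : 1 < γₙ)
    (a : ℝ → ℝ)
    (ha : ∀ θ, a θ = (γₙ * θ - θ₀) / (γₙ - 1) -
      Real.sqrt (γₙ * (θ - θ₀) ^ 2 / (γₙ - 1) ^ 2 - U / n))
    (D : Set ℝ)
    (hD : D = {θ : ℝ | θ₀ < θ ∧ U / n ≤ γₙ * (θ - θ₀) ^ 2 / (γₙ - 1) ^ 2}) :
    ∃! θm : ℝ, θm ∈ D ∧ a θm = θ₀ + Real.sqrt (U * (γₙ - 1) / n) ∧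
      ∀ θ ∈ D, a θm ≤ a θ := by
  subst hD
  have hn0 : (0:ℝ) < n := by exact_mod_cast Nat.pos_of_ne_zero (by omega)
  have hg0 : 0 < γₙ - 1 := by linarith
  have hγ0 : 0 < γₙ := by linarith
  have hsnn : 0 ≤ U * (γₙ - 1) / n := by positivity
  set s := Real.sqrt (U * (γₙ - 1) / n) with hs
  have hs2 : s ^ 2 = U * (γₙ - 1) / n := Real.sq_sqrt hsnn
  have hs0 : 0 < s := Real.sqrt_pos.mpr (by positivity)
  have hs2n : s ^ 2 * n = U * (γₙ - 1) := by
    rw [hs2]; field_simp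
  -- value at the minimizer
  have hval : a (θ₀ + s) = θ₀ + s := by
    rw [ha]
    have h1 : γₙ * (θ₀ + s - θ₀) ^ 2 / (γₙ - 1) ^ 2 - U / n = (s / (γₙ - 1)) ^ 2 := by
      field_simp
      linear_combination (γₙ - 1) * hs2n
    rw [h1, Real.sqrt_sq (by positivity)]
    field_simp
    ring
  -- membership
  have hmem : θ₀ < θ₀ + s ∧ U / n ≤ γₙ * (θ₀ + s - θ₀) ^ 2 / (γₙ - 1) ^ 2 := by
    constructor
    · linarith
    · rw [div_le_div_iff₀ hn0 (by positivity)]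
      nlinarith [hs2n, mul_pos hU hg0]
  -- key inequality with equality characterization
  have key : ∀ θ : ℝ, θ₀ < θ → U / n ≤ γₙ * (θ - θ₀) ^ 2 / (γₙ - 1) ^ 2 →
      θ₀ + s ≤ a θ ∧ (a θ = θ₀ + s → θ = θ₀ + s) := by
    intro θ hθ hc
    set x := θ - θ₀ with hx
    have hx0 : 0 < x := by simp [hx]; linarith
    have hc' : s ^ 2 * (γₙ - 1) ≤ γₙ * x ^ 2 := by
      rw [div_le_div_iff₀ hn0 (by positivity)] at hc
      nlinarith [hs2n, hc, hn0]
    set L := γₙ * x / (γₙ - 1) - s with hL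
    have hL0 : 0 ≤ L := by
      rw [hL, sub_nonneg, le_div_iff₀ hg0]
      nlinarith [hc', sq_nonneg (γₙ * x - s * (γₙ - 1))]
    have hins : γₙ * x ^ 2 / (γₙ - 1) ^ 2 - U / n =
        L ^ 2 - γₙ * (x - s) ^ 2 / (γₙ - 1) := by
      have : U / n = s ^ 2 / (γₙ - 1) := by rw [hs2]; field_simp
      rw [this, hL]
      field_simp
      ring
    have hins_le : γₙ * x ^ 2 / (γₙ - 1) ^ 2 - U / n ≤ L ^ 2 := by
      rw [hins]
      have : 0 ≤ γₙ * (x - s) ^ 2 / (γₙ - 1) := by positivity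
      linarith
    have ht : Real.sqrt (γₙ * x ^ 2 / (γₙ - 1) ^ 2 - U / n) ≤ L := by
      calc Real.sqrt (γₙ * x ^ 2 / (γₙ - 1) ^ 2 - U / n) ≤ Real.sqrt (L ^ 2) :=
            Real.sqrt_le_sqrt hins_le
        _ = L := Real.sqrt_sq hL0
    have haθ : a θ = (γₙ * θ - θ₀) / (γₙ - 1) -
        Real.sqrt (γₙ * x ^ 2 / (γₙ - 1) ^ 2 - U / n) := by rw [ha θ, hx]
    have hid : (γₙ * θ - θ₀) / (γₙ - 1) - L = θ₀ + s := by
      rw [hL, hx]; field_simp; ring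
    constructor
    · rw [haθ]; linarith
    · intro heq
      have htL : Real.sqrt (γₙ * x ^ 2 / (γₙ - 1) ^ 2 - U / n) = L := by
        rw [haθ] at heq; linarith
      have hnn : 0 ≤ γₙ * x ^ 2 / (γₙ - 1) ^ 2 - U / n := by linarith [hc]
      have hsq : γₙ * x ^ 2 / (γₙ - 1) ^ 2 - U / n = L ^ 2 := by
        rw [← htL, Real.sq_sqrt hnn]
      have hxs : γₙ * (x - s) ^ 2 / (γₙ - 1) = 0 := by
        rw [hins] at hsq; linarith
      have h2 : γₙ * (x - s) ^ 2 = 0 := by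
        rw [div_eq_zero_iff] at hxs
        rcases hxs with h | h
        · exact h
        · exact absurd h hg0.ne'
      have h3 : (x - s) ^ 2 = 0 := by
        rcases mul_eq_zero.mp h2 with h | h
        · exact absurd h hγ0.ne'
        · exact h
      have h4 : x - s = 0 := by
        exact pow_eq_zero_iff two_ne_zero |>.mp h3
      have h5 : x = s := by linarith
      rw [hx] at h5; linarith
  refine ⟨θ₀ + s, ⟨hmem, hval, ?_⟩, ?_⟩
  · intro θ hθ
    rw [hval]
    exact ((key θ hθ.1 hθ.2).1)
  · rintro θ ⟨hθD, hθval, -⟩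
    exact (key θ hθD.1 hθD.2).2 hθval
end

section
/- For the one-sample t-test rejection regions Ω(θ) = (a(θ), b(θ)) with a, b as in equations (18)–(19), there exist θ₁ ≠ θ₂ in (θ₀, ∞) such that neither Ω(θ₁) ⊆ Ω(θ₂) nor Ω(θ₂) ⊆ Ω(θ₁); i.e., the rejection regions are not nested and no single region covers all others. -/
/-!
Write `x = θ - θ₀` and `s = √γ`. The interval `Ω(θ)` has centre `θ₀ + γx/(γ-1)` and radius at most
`s x/(γ-1)`, so it lies between `θ₀ + s x/(s+1)` and `θ₀ + s x/(s-1)`. These bounds grow linearly in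
`x` with different slopes, so the interval at `x₂ = (s+1)/(s-1) · x₁` lies entirely to the right of
the one at `x₁`; two nonempty intervals lying side by side are not nested.
-/

open Set

theorem Ioo_not_subset_Ioo_of_le {α : Type*} [LinearOrder α] [DenselyOrdered α]
    {a₁ b₁ a₂ b₂ : α} (h₁ : a₁ < b₁) (h₂ : a₂ < b₂) (h : b₁ ≤ a₂) :
    ¬ Ioo a₁ b₁ ⊆ Ioo a₂ b₂ ∧ ¬ Ioo a₂ b₂ ⊆ Ioo a₁ b₁ := by
  rw [Ioo_subset_Ioo_iff h₁, Ioo_subset_Ioo_iff h₂]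
  constructor
  · rintro ⟨ha, -⟩; exact (h₁.trans_le h).not_ge ha
  · rintro ⟨-, hb⟩; exact (h₂.trans_le hb).not_ge h

section Endpoints

variable {γ θ₀ θ u : ℝ}

theorem sqrt_discr_le (hγ : 1 < γ) (hθ : θ₀ ≤ θ) (hu : 0 ≤ u) :
    √(γ * (θ - θ₀) ^ 2 / (γ - 1) ^ 2 - u) ≤ √γ * (θ - θ₀) / (γ - 1) := by
  have hγ₁ : 0 < γ - 1 := sub_pos.mpr hγ
  have hx : 0 ≤ θ - θ₀ := sub_nonneg.mpr hθ
  rw [Real.sqrt_le_left (by positivity), div_pow, mul_pow, Real.sq_sqrt (by linarith)]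
  linarith

theorem discr_pos_of_le (hγ : 1 < γ) (hu : 0 ≤ u) (hθ : (γ - 1) * (u + 1) ≤ θ - θ₀) :
    u < γ * (θ - θ₀) ^ 2 / (γ - 1) ^ 2 := by
  have hγ₁ : 0 < γ - 1 := sub_pos.mpr hγ
  rw [lt_div_iff₀ (by positivity)]
  have hsq : ((γ - 1) * (u + 1)) ^ 2 ≤ (θ - θ₀) ^ 2 := pow_le_pow_left₀ (by positivity) hθ 2
  have hu₁ : u < (u + 1) ^ 2 := by nlinarith
  nlinarith [mul_lt_mul_of_pos_left hu₁ (pow_pos hγ₁ 2)]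

theorem lower_endpoint_ge (hγ : 1 < γ) (hθ : θ₀ ≤ θ) (hu : 0 ≤ u) :
    θ₀ + √γ * (θ - θ₀) / (√γ + 1) ≤
      (γ * θ - θ₀) / (γ - 1) - √(γ * (θ - θ₀) ^ 2 / (γ - 1) ^ 2 - u) := by
  have hs : √γ ^ 2 = γ := Real.sq_sqrt (by linarith)
  have hγ₁ : γ - 1 ≠ 0 := (sub_pos.mpr hγ).ne'
  have hs₁ : √γ + 1 ≠ 0 := by positivity
  have hcentre : (γ * θ - θ₀) / (γ - 1) - √γ * (θ - θ₀) / (γ - 1) =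
      θ₀ + √γ * (θ - θ₀) / (√γ + 1) := by
    field_simp
    linear_combination -(θ - θ₀) * hs
  linarith [sqrt_discr_le hγ hθ hu]

theorem upper_endpoint_le (hγ : 1 < γ) (hθ : θ₀ ≤ θ) (hu : 0 ≤ u) :
    (γ * θ - θ₀) / (γ - 1) + √(γ * (θ - θ₀) ^ 2 / (γ - 1) ^ 2 - u) ≤
      θ₀ + √γ * (θ - θ₀) / (√γ - 1) := by
  have hs : √γ ^ 2 = γ := Real.sq_sqrt (by linarith)
  have hγ₁ : γ - 1 ≠ 0 := (sub_pos.mpr hγ).ne'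
  have hs₁ : √γ - 1 ≠ 0 := (sub_pos.mpr (Real.lt_sqrt_of_sq_lt (by linarith))).ne'
  have hcentre : (γ * θ - θ₀) / (γ - 1) + √γ * (θ - θ₀) / (γ - 1) =
      θ₀ + √γ * (θ - θ₀) / (√γ - 1) := by
    field_simp
    linear_combination (θ - θ₀) * hs
  linarith [sqrt_discr_le hγ hθ hu]

end Endpoints

theorem stmt_17_general (n : ℕ) (U θ₀ γₙ : ℝ) (hU : 0 < U) (hγₙ : 1 < γₙ)
    (a b : ℝ → ℝ)
    (ha : ∀ θ, a θ = (γₙ * θ - θ₀) / (γₙ - 1) -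
      Real.sqrt (γₙ * (θ - θ₀) ^ 2 / (γₙ - 1) ^ 2 - U / n))
    (hb : ∀ θ, b θ = (γₙ * θ - θ₀) / (γₙ - 1) +
      Real.sqrt (γₙ * (θ - θ₀) ^ 2 / (γₙ - 1) ^ 2 - U / n))
    (D : Set ℝ)
    (hD : D = {θ : ℝ | θ₀ < θ ∧ U / n ≤ γₙ * (θ - θ₀) ^ 2 / (γₙ - 1) ^ 2})
    (Ω : ℝ → Set ℝ) (hΩ : ∀ θ, Ω θ = Ioo (a θ) (b θ)) :
    ∃ θ₁ ∈ D, ∃ θ₂ ∈ D, θ₁ ≠ θ₂ ∧ ¬ Ω θ₁ ⊆ Ω θ₂ ∧ ¬ Ω θ₂ ⊆ Ω θ₁ := by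
  have hu : 0 ≤ U / n := by positivity
  set s := √γₙ
  have hs : 1 < s := Real.lt_sqrt_of_sq_lt (by linarith)
  set x₁ := (γₙ - 1) * (U / n + 1)
  have hx₁ : 0 < x₁ := mul_pos (sub_pos.mpr hγₙ) (by linarith)
  have hx₂ : x₁ ≤ (s + 1) / (s - 1) * x₁ :=
    le_mul_of_one_le_left hx₁.le ((one_le_div (sub_pos.mpr hs)).mpr (by linarith))
  set θ₁ := θ₀ + x₁
  set θ₂ := θ₀ + (s + 1) / (s - 1) * x₁
  have hmem : ∀ θ, θ₁ ≤ θ → θ ∈ D ∧ a θ < b θ := by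
    intro θ hθ
    have hdiscr := discr_pos_of_le hγₙ hu (le_sub_iff_add_le'.mpr hθ)
    rw [hD, ha, hb]
    exact ⟨⟨by linarith, hdiscr.le⟩, by linarith [Real.sqrt_pos.mpr (sub_pos.mpr hdiscr)]⟩
  obtain ⟨hD₁, hab₁⟩ := hmem θ₁ le_rfl
  obtain ⟨hD₂, hab₂⟩ := hmem θ₂ (by linarith)
  have hsep : b θ₁ ≤ a θ₂ := calc
    b θ₁ ≤ θ₀ + s * (θ₁ - θ₀) / (s - 1) := hb θ₁ ▸ upper_endpoint_le hγₙ (by linarith) hu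
    _ = θ₀ + s * (θ₂ - θ₀) / (s + 1) := by
      simp only [θ₁, θ₂]
      field_simp [(sub_pos.mpr hs).ne']
      ring
    _ ≤ a θ₂ := ha θ₂ ▸ lower_endpoint_ge hγₙ (by linarith) hu
  obtain ⟨h₁₂, h₂₁⟩ := Ioo_not_subset_Ioo_of_le hab₁ hab₂ hsep
  rw [← hΩ, ← hΩ] at h₁₂ h₂₁
  exact ⟨θ₁, hD₁, θ₂, hD₂, fun h => h₁₂ (h ▸ subset_rfl), h₁₂, h₂₁⟩

theorem stmt_17 (n : ℕ) (hn : 1 ≤ n) (U θ₀ γₙ : ℝ) (hU : 0 < U) (hγₙ : 1 < γₙ)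
    (a b : ℝ → ℝ)
    (ha : ∀ θ, a θ = (γₙ * θ - θ₀) / (γₙ - 1) -
      Real.sqrt (γₙ * (θ - θ₀) ^ 2 / (γₙ - 1) ^ 2 - U / n))
    (hb : ∀ θ, b θ = (γₙ * θ - θ₀) / (γₙ - 1) +
      Real.sqrt (γₙ * (θ - θ₀) ^ 2 / (γₙ - 1) ^ 2 - U / n))
    (D : Set ℝ)
    (hD : D = {θ : ℝ | θ₀ < θ ∧ U / n ≤ γₙ * (θ - θ₀) ^ 2 / (γₙ - 1) ^ 2})
    (Ω : ℝ → Set ℝ) (hΩ : ∀ θ, Ω θ = Ioo (a θ) (b θ)) :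
    ∃ θ₁ ∈ D, ∃ θ₂ ∈ D, θ₁ ≠ θ₂ ∧ ¬ Ω θ₁ ⊆ Ω θ₂ ∧ ¬ Ω θ₂ ⊆ Ω θ₁ :=
  stmt_17_general n U θ₀ γₙ hU hγₙ a b ha hb D hD Ω hΩ
end
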